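/- arXiv:0905.3458 — 3 statements merged into one kernel-verified Lean document; each statement's English description precedes it below -/
import Mathlib

section
/- Let n ≥ 1 be an integer, t > 0 and x, y ∈ ℝ. With the convention x₀ = y and xₙ = x, the (n−1)-fold Gaussian integral (n/(2πt))^{n/2} · ∫_{ℝ^{n−1}} ∏_{j=1}^{n} [ e^{−t·x_j²/(4n)} · e^{−n·(x_j − x_{j−1})²/(2t)} · e^{−t·x_{j−1}²/(4n)} ] dx₁ ⋯ dx_{n−1} (interpreted for n = 1 as the integrand with no integration) equals K_n(t,x,y). -/
noncomputable section
open MeasureTheory Real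

/-- `w_n(t) = sqrt(1 + t²/(4n²))`. -/
def wn (n : ℕ) (t : ℝ) : ℝ := Real.sqrt (1 + t ^ 2 / (4 * (n : ℝ) ^ 2))

/-- `a_n(t) = (1 + (t/n)·w_n(t) + t²/(2n²))^n`. -/
def an (n : ℕ) (t : ℝ) : ℝ := (1 + (t / n) * wn n t + t ^ 2 / (2 * (n : ℝ) ^ 2)) ^ n

/-- `b_n(t) = (1 − (t/n)·w_n(t) + t²/(2n²))^n`. -/
def bn (n : ℕ) (t : ℝ) : ℝ := (1 - (t / n) * wn n t + t ^ 2 / (2 * (n : ℝ) ^ 2)) ^ n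

/-- `a'_n(t) = (1 + (t/n)·w_n(t) + t²/(2n²))^(n-1)`. -/
def an' (n : ℕ) (t : ℝ) : ℝ := (1 + (t / n) * wn n t + t ^ 2 / (2 * (n : ℝ) ^ 2)) ^ (n - 1)

/-- `b'_n(t) = (1 − (t/n)·w_n(t) + t²/(2n²))^(n-1)`. -/
def bn' (n : ℕ) (t : ℝ) : ℝ := (1 - (t / n) * wn n t + t ^ 2 / (2 * (n : ℝ) ^ 2)) ^ (n - 1)

/-- The kernel `K_n(t,x,y)` of the `n`-th symmetric Trotter product for the
harmonic oscillator. -/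
def Kn (n : ℕ) (t x y : ℝ) : ℝ :=
  Real.pi ^ (-(1 : ℝ) / 2) * Real.sqrt (wn n t / (an n t - bn n t)) *
    Real.exp ((2 * wn n t / (an n t - bn n t)) * x * y) *
    Real.exp ((-t / (4 * n) -
        ((n : ℝ) / (2 * t)) * (1 - (an' n t - bn' n t) / (an n t - bn n t))) * (x ^ 2 + y ^ 2))

/-- The broken path `x₀ = y, x₁, …, x_{n-1}, xₙ = x`, with intermediate points
given by `v : Fin (n-1) → ℝ`. -/
def path (n : ℕ) (x y : ℝ) (v : Fin (n - 1) → ℝ) (j : ℕ) : ℝ :=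
  if j = 0 then y else if j = n then x else if h : j - 1 < n - 1 then v ⟨j - 1, h⟩ else 0

/-!
With `α = w_n(t)` and `θ = arsinh (t w_n(t) / n)` one has
`e^{±θ} = 1 ± (t/n) w_n(t) + t²/(2n²)`, and each factor of the integrand is the Mehler kernel
`exp (-(α/2) coth θ (u² + v²) + α u v / sinh θ)`. Mehler kernels form a semigroup in the
angle: integrating out the middle point of two of them is a one-dimensional Gaussian integral,
and the addition formulas for `sinh` and `cosh` identify the result as the Mehler kernel of
angle `a + b`, times `√(2π sinh a sinh b / (α sinh (a + b)))`. Integrating out the points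
`x₁, …, x_{n-1}` one at a time therefore leaves the Mehler kernel of angle `nθ`, and
`a_n - b_n = 2 sinh (nθ)`, `a'_n - b'_n = 2 sinh ((n-1)θ)` turn it into `K_n`.
-/

open Finset

lemma exp_neg_mul_sq_add_mul_eq (a b u : ℝ) (ha : a ≠ 0) :
    exp (-a * u ^ 2 + b * u) = exp (-a * (u - b / (2 * a)) ^ 2) * exp (b ^ 2 / (4 * a)) := by
  rw [← exp_add]; congr 1; field_simp; ring

lemma integrable_exp_neg_mul_sq_add_mul {a : ℝ} (ha : 0 < a) (b : ℝ) :
    Integrable fun u : ℝ => exp (-a * u ^ 2 + b * u) := by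
  simp_rw [exp_neg_mul_sq_add_mul_eq a b _ ha.ne']
  exact ((integrable_exp_neg_mul_sq ha).comp_sub_right (b / (2 * a))).mul_const _

lemma integral_exp_neg_mul_sq_add_mul {a : ℝ} (ha : 0 < a) (b : ℝ) :
    ∫ u : ℝ, exp (-a * u ^ 2 + b * u) = √(π / a) * exp (b ^ 2 / (4 * a)) := by
  simp_rw [exp_neg_mul_sq_add_mul_eq a b _ ha.ne', integral_mul_const,
    integral_sub_right_eq_self (fun u : ℝ => exp (-a * u ^ 2)), integral_gaussian]

def mehlerKernel (α θ x y : ℝ) : ℝ :=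
  exp (-(α / 2) * (cosh θ / sinh θ) * (x ^ 2 + y ^ 2) + α / sinh θ * x * y)

section Mehler

variable {α a b : ℝ}

lemma mehlerKernel_pos (α θ x y : ℝ) : 0 < mehlerKernel α θ x y := exp_pos _

lemma continuous_mehlerKernel (α θ : ℝ) :
    Continuous fun p : ℝ × ℝ => mehlerKernel α θ p.1 p.2 := by
  unfold mehlerKernel; fun_prop

lemma mehlerKernel_mul_mehlerKernel (ha : 0 < a) (hb : 0 < b) (x y u : ℝ) :
    mehlerKernel α a x u * mehlerKernel α b u y =
      exp (-(α * sinh (a + b) / (2 * sinh a * sinh b)) * u ^ 2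
          + α * (x / sinh a + y / sinh b) * u)
        * exp (-(α / 2) * (cosh a / sinh a * x ^ 2 + cosh b / sinh b * y ^ 2)) := by
  have hsa := sinh_pos_iff.2 ha
  have hsb := sinh_pos_iff.2 hb
  simp only [mehlerKernel, ← exp_add, sinh_add]
  congr 1
  field_simp
  ring

lemma integrable_mehlerKernel_mul_mehlerKernel (hα : 0 < α) (ha : 0 < a) (hb : 0 < b)
    (x y : ℝ) :
    Integrable fun u => mehlerKernel α a x u * mehlerKernel α b u y := by
  have := sinh_pos_iff.2 ha
  have := sinh_pos_iff.2 hb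
  have := sinh_pos_iff.2 (add_pos ha hb)
  simp_rw [mehlerKernel_mul_mehlerKernel ha hb]
  exact (integrable_exp_neg_mul_sq_add_mul (by positivity) _).mul_const _

theorem integral_mehlerKernel_mul_mehlerKernel (hα : 0 < α) (ha : 0 < a) (hb : 0 < b)
    (x y : ℝ) :
    ∫ u, mehlerKernel α a x u * mehlerKernel α b u y =
      √(2 * π * sinh a * sinh b / (α * sinh (a + b))) * mehlerKernel α (a + b) x y := by
  have hsa := sinh_pos_iff.2 ha
  have hsb := sinh_pos_iff.2 hb
  have hsab := sinh_pos_iff.2 (add_pos ha hb)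
  simp_rw [mehlerKernel_mul_mehlerKernel ha hb, integral_mul_const,
    integral_exp_neg_mul_sq_add_mul (by positivity : 0 < α * sinh (a + b) / (2 * sinh a * sinh b)),
    mul_assoc, ← exp_add]
  congr 2
  · field_simp
  · rw [cosh_add, sinh_add]
    field_simp
    linear_combination (-4 * sinh b ^ 2 * x ^ 2) * cosh_sq_sub_sinh_sq a
      + (-4 * sinh a ^ 2 * y ^ 2) * cosh_sq_sub_sinh_sq b

end Mehler

def pathProd (g : ℝ → ℝ → ℝ) (m : ℕ) (x y : ℝ) (v : Fin (m - 1) → ℝ) : ℝ :=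
  ∏ j ∈ range m, g (path m x y v (j + 1)) (path m x y v j)

section PathProd

variable (g : ℝ → ℝ → ℝ)

lemma path_cons (k : ℕ) (x y u : ℝ) (v : Fin k → ℝ) {j : ℕ} (hj : j ≤ k + 1) :
    path (k + 2) x y (Fin.cons u v) (j + 1) = path (k + 1) x u v j := by
  unfold path
  rcases j with _ | j
  · simp
  · rcases (by omega : j = k ∨ j < k) with rfl | hjk
    · simp
    · simp only [Nat.add_eq_zero_iff, one_ne_zero, and_false, and_self, ↓reduceIte,
        Nat.add_right_cancel_iff, show j ≠ k by omega, add_tsub_cancel_right, Nat.add_one_sub_one,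
        Order.lt_add_one_iff, Order.add_one_le_iff, hjk, ↓reduceDIte]
      exact Fin.cons_succ (α := fun _ => ℝ) u v ⟨j, hjk⟩

lemma pathProd_one (x y : ℝ) : pathProd g 1 x y = fun _ => g x y := by
  ext v
  simp [pathProd, path]

lemma pathProd_cons (k : ℕ) (x y u : ℝ) (v : Fin k → ℝ) :
    pathProd g (k + 2) x y (Fin.cons u v) = pathProd g (k + 1) x u v * g u y := by
  rw [pathProd, prod_range_succ', pathProd]
  congr 1
  refine prod_congr rfl fun j hj => ?_
  have := mem_range.1 hj
  rw [path_cons k x y u v (by omega), path_cons k x y u v (by omega)]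

lemma pathProd_nonneg (hg0 : ∀ u v, 0 ≤ g u v) (m : ℕ) (x y : ℝ) (v : Fin (m - 1) → ℝ) :
    0 ≤ pathProd g m x y v :=
  prod_nonneg fun _ _ => hg0 _ _

lemma measurable_pathProd (hg : Measurable (Function.uncurry g)) (m : ℕ) (x y : ℝ) :
    Measurable (pathProd g m x y) := by
  have hpath (j : ℕ) : Measurable fun v : Fin (m - 1) → ℝ => path m x y v j := by
    unfold path
    split_ifs <;> fun_prop
  exact Finset.measurable_prod _ fun j _ => hg.comp ((hpath (j + 1)).prodMk (hpath j))

variable {g} (hg : Measurable (Function.uncurry g)) {k : ℕ} {x y : ℝ}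

lemma pathProd_comp_piFinSuccAbove_symm :
    pathProd g (k + 2) x y ∘
        (MeasurableEquiv.piFinSuccAbove (fun _ : Fin (k + 1) => ℝ) 0).symm =
      fun z => pathProd g (k + 1) x z.1 z.2 * g z.1 y := by
  ext z
  simp only [Function.comp_apply, MeasurableEquiv.piFinSuccAbove_symm_apply, Fin.insertNthEquiv,
    Equiv.coe_fn_mk, Fin.insertNth_zero, cast_eq]
  exact pathProd_cons g k x y z.1 z.2

include hg in
lemma integrable_pathProd_succ (hg0 : ∀ u v, 0 ≤ g u v)
    (hint : ∀ u, Integrable (pathProd g (k + 1) x u))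
    (hint' : Integrable fun u => (∫ v, pathProd g (k + 1) x u v) * g u y) :
    Integrable (pathProd g (k + 2) x y) := by
  set e := MeasurableEquiv.piFinSuccAbove (fun _ : Fin (k + 1) => ℝ) 0
  have hmeas : Measurable (pathProd g (k + 2) x y ∘ e.symm) :=
    (measurable_pathProd g hg (k + 2) x y).comp e.symm.measurable
  rw [← (volume_preserving_piFinSuccAbove _ 0).symm.integrable_comp_emb
    e.symm.measurableEmbedding]
  rw [pathProd_comp_piFinSuccAbove_symm] at hmeas ⊢
  refine (integrable_prod_iff hmeas.aestronglyMeasurable).2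
    ⟨.of_forall fun u => (hint u).mul_const (g u y), ?_⟩
  simp_rw [Real.norm_of_nonneg (mul_nonneg (pathProd_nonneg g hg0 _ _ _ _) (hg0 _ _)),
    integral_mul_const]
  exact hint'

lemma integral_pathProd_succ (hint : Integrable (pathProd g (k + 2) x y)) :
    ∫ v, pathProd g (k + 2) x y v = ∫ u, (∫ v, pathProd g (k + 1) x u v) * g u y := by
  set e := MeasurableEquiv.piFinSuccAbove (fun _ : Fin (k + 1) => ℝ) 0
  have he := (volume_preserving_piFinSuccAbove (fun _ : Fin (k + 1) => ℝ) 0).symm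
  rw [← he.integrable_comp_emb e.symm.measurableEmbedding,
    pathProd_comp_piFinSuccAbove_symm] at hint
  calc ∫ v, pathProd g (k + 2) x y v
      = ∫ z, (pathProd g (k + 2) x y ∘ e.symm) z := (he.integral_comp' _).symm
    _ = ∫ z : ℝ × (Fin k → ℝ), pathProd g (k + 1) x z.1 z.2 * g z.1 y := by
        rw [pathProd_comp_piFinSuccAbove_symm]
    _ = ∫ u, ∫ v, pathProd g (k + 1) x u v * g u y := integral_prod _ hint
    _ = ∫ u, (∫ v, pathProd g (k + 1) x u v) * g u y := by simp_rw [integral_mul_const]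

end PathProd

theorem integrable_pathProd_mehlerKernel_and_integral {α θ : ℝ} (hα : 0 < α) (hθ : 0 < θ)
    (k : ℕ) (x y : ℝ) :
    Integrable (pathProd (mehlerKernel α θ) (k + 1) x y) ∧
      ∫ v, pathProd (mehlerKernel α θ) (k + 1) x y v =
        √((2 * π * sinh θ / α) ^ k * (sinh θ / sinh ((k + 1 : ℕ) * θ))) *
          mehlerKernel α ((k + 1 : ℕ) * θ) x y := by
  have hg : Measurable (Function.uncurry (mehlerKernel α θ)) :=
    (continuous_mehlerKernel α θ).measurable
  induction k generalizing x y with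
  | zero =>
    change Integrable (pathProd _ 1 x y) ∧ ∫ v, pathProd _ 1 x y v = _
    simp [pathProd_one, measureReal_def, volume_pi, (sinh_pos_iff.2 hθ).ne']
  | succ k ih =>
    have hk : 0 < ((k + 1 : ℕ) : ℝ) * θ := by positivity
    have hint' : Integrable fun u =>
        (∫ v, pathProd (mehlerKernel α θ) (k + 1) x u v) * mehlerKernel α θ u y := by
      simp_rw [(ih _ _).2, mul_assoc]
      exact (integrable_mehlerKernel_mul_mehlerKernel hα hk hθ x y).const_mul _
    have hint := integrable_pathProd_succ hg (fun u v => (mehlerKernel_pos α θ u v).le)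
      (fun u => (ih x u).1) hint'
    refine ⟨hint, ?_⟩
    rw [integral_pathProd_succ hint,
      show ((k + 1 + 1 : ℕ) : ℝ) * θ = (k + 1 : ℕ) * θ + θ by push_cast; ring]
    simp_rw [(ih _ _).2, mul_assoc, integral_const_mul,
      integral_mehlerKernel_mul_mehlerKernel hα hk hθ, ← mul_assoc]
    have := sinh_pos_iff.2 hθ
    have := sinh_pos_iff.2 hk
    rw [← Real.sqrt_mul (by positivity), pow_succ]
    congr 2
    field_simp

def trotterAngle (n : ℕ) (t : ℝ) : ℝ := arsinh (t / n * wn n t)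

section Trotter

variable {n : ℕ} {t : ℝ}

lemma one_le_wn (n : ℕ) (t : ℝ) : 1 ≤ wn n t :=
  Real.one_le_sqrt.2 (le_add_of_nonneg_right (by positivity))

lemma sinh_trotterAngle (n : ℕ) (t : ℝ) : sinh (trotterAngle n t) = t / n * wn n t :=
  sinh_arsinh _

lemma cosh_trotterAngle (n : ℕ) (t : ℝ) :
    cosh (trotterAngle n t) = 1 + t ^ 2 / (2 * (n : ℝ) ^ 2) := by
  have hw : wn n t ^ 2 = 1 + t ^ 2 / (4 * (n : ℝ) ^ 2) := Real.sq_sqrt (by positivity)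
  rw [trotterAngle, cosh_arsinh, mul_pow, hw,
    Real.sqrt_eq_iff_eq_sq (by positivity) (by positivity)]
  ring

lemma exp_trotterAngle (n : ℕ) (t : ℝ) :
    exp (trotterAngle n t) = 1 + t / n * wn n t + t ^ 2 / (2 * (n : ℝ) ^ 2) := by
  rw [← cosh_add_sinh, cosh_trotterAngle, sinh_trotterAngle]; ring

lemma exp_neg_trotterAngle (n : ℕ) (t : ℝ) :
    exp (-trotterAngle n t) = 1 - t / n * wn n t + t ^ 2 / (2 * (n : ℝ) ^ 2) := by
  rw [← cosh_sub_sinh, cosh_trotterAngle, sinh_trotterAngle]; ring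

lemma trotterAngle_pos (hn : 0 < n) (ht : 0 < t) : 0 < trotterAngle n t :=
  arsinh_pos_iff.2 (mul_pos (by positivity) (by linarith [one_le_wn n t]))

lemma an_sub_bn (n : ℕ) (t : ℝ) : an n t - bn n t = 2 * sinh (n * trotterAngle n t) := by
  rw [sinh_eq, an, bn, ← exp_trotterAngle, ← exp_neg_trotterAngle, ← exp_nat_mul,
    ← exp_nat_mul]
  ring_nf

lemma an'_sub_bn' (hn : 0 < n) (t : ℝ) :
    an' n t - bn' n t = 2 * sinh ((n - 1) * trotterAngle n t) := by
  rw [sinh_eq, an', bn', ← exp_trotterAngle, ← exp_neg_trotterAngle, ← exp_nat_mul,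
    ← exp_nat_mul, Nat.cast_pred hn]
  ring_nf

lemma trotterFactor_eq_mehlerKernel (hn : 0 < n) (ht : 0 < t) (u v : ℝ) :
    exp (-t * u ^ 2 / (4 * n)) * exp (-(n : ℝ) * (u - v) ^ 2 / (2 * t)) *
        exp (-t * v ^ 2 / (4 * n)) =
      mehlerKernel (wn n t) (trotterAngle n t) u v := by
  have := one_le_wn n t
  rw [mehlerKernel, ← exp_add, ← exp_add, cosh_trotterAngle, sinh_trotterAngle]
  congr 1
  field_simp
  ring

end Trotter

lemma inv_rpow_mul_sqrt_pow_mul {c : ℝ} (hc : 0 < c) (X : ℝ) (m : ℕ) :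
    c⁻¹ ^ (((m + 1 : ℕ) : ℝ) / 2) * √(c ^ m * X) = √(X / c) := by
  have hhalf : c⁻¹ ^ (((m + 1 : ℕ) : ℝ) / 2) = √(c⁻¹ ^ (m + 1)) := by
    rw [Real.sqrt_eq_rpow, ← Real.rpow_natCast, ← Real.rpow_mul (by positivity)]
    ring_nf
  rw [hhalf, ← Real.sqrt_mul (by positivity), inv_pow, pow_succ]
  congr 1
  field_simp

lemma Kn_eq_mehlerKernel {n : ℕ} (hn : 0 < n) {t : ℝ} (ht : 0 < t) (x y : ℝ) :
    Kn n t x y = √(wn n t / (2 * π * sinh (n * trotterAngle n t))) *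
      mehlerKernel (wn n t) (n * trotterAngle n t) x y := by
  have hsinh : 0 < sinh (n * trotterAngle n t) :=
    sinh_pos_iff.2 (mul_pos (by positivity) (trotterAngle_pos hn ht))
  have hpre : π ^ (-(1 : ℝ) / 2) * √(wn n t / (2 * sinh (n * trotterAngle n t))) =
      √(wn n t / (2 * π * sinh (n * trotterAngle n t))) := by
    rw [neg_div, Real.rpow_neg pi_nonneg, ← Real.sqrt_eq_rpow, ← Real.sqrt_inv,
      ← Real.sqrt_mul (by positivity)]
    congr 1
    field_simp
  rw [Kn, an_sub_bn, an'_sub_bn' hn, hpre, mul_assoc, mehlerKernel, ← exp_add]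
  congr 2
  rw [show ((n : ℝ) - 1) * trotterAngle n t = n * trotterAngle n t - trotterAngle n t by ring,
    sinh_sub, cosh_trotterAngle, sinh_trotterAngle]
  field_simp
  ring

/-- The `(n−1)`-fold Gaussian integral expression for the kernel of
`[e^{-tV/2n} e^{-tH₀/n} e^{-tV/2n}]^n` (harmonic oscillator, `V(x) = x²/2`,
`H₀ = -½ d²/dx²`) equals `K_n(t,x,y)`. -/
theorem gaussian_integral_eq_Kn (n : ℕ) (hn : 1 ≤ n) (t : ℝ) (ht : 0 < t) (x y : ℝ) :
    ((n : ℝ) / (2 * Real.pi * t)) ^ ((n : ℝ) / 2) *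
      ∫ v : Fin (n - 1) → ℝ,
        ∏ j ∈ Finset.range n,
          (Real.exp (-t * (path n x y v (j + 1)) ^ 2 / (4 * n)) *
            Real.exp (-(n : ℝ) * (path n x y v (j + 1) - path n x y v j) ^ 2 / (2 * t)) *
            Real.exp (-t * (path n x y v j) ^ 2 / (4 * n)))
      = Kn n t x y := by
  obtain ⟨m, rfl⟩ : ∃ m, n = m + 1 := ⟨n - 1, by omega⟩
  have hn' : 0 < m + 1 := m.succ_pos
  have hw : 0 < wn (m + 1) t := zero_lt_one.trans_le (one_le_wn _ _)
  simp_rw [trotterFactor_eq_mehlerKernel hn' ht]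
  change _ * ∫ v, pathProd (mehlerKernel _ _) (m + 1) x y v = _
  rw [(integrable_pathProd_mehlerKernel_and_integral hw (trotterAngle_pos hn' ht) m x y).2,
    Kn_eq_mehlerKernel hn' ht, ← mul_assoc, sinh_trotterAngle]
  congr 1
  rw [show ((m + 1 : ℕ) : ℝ) / (2 * π * t) = (2 * π * t / (m + 1 : ℕ))⁻¹ by rw [inv_div],
    show 2 * π * (t / (m + 1 : ℕ) * wn (m + 1) t) / wn (m + 1) t = 2 * π * t / (m + 1 : ℕ) by
      field_simp,
    inv_rpow_mul_sqrt_pow_mul (by positivity)]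
  congr 1
  field_simp
end
end

section
/- Let 𝒜 be a unital complex Banach algebra, let A, B ∈ 𝒜 and let L > 0. Then there exists a constant C > 0 such that for every integer n ≥ 1 and every t ∈ [−L, L], ‖(exp(tB/(2n))·exp(tA/n)·exp(tB/(2n)))^n − exp(t(A+B))‖ ≤ C/n². -/
/-!
Write `S(h) = exp(hB/2) exp(hA) exp(hB/2)` and `T(h) = exp(h(A + B))`. Because the splitting is
symmetric, the quadratic Taylor polynomials of `S` and `T` coincide, so `‖S(h) - T(h)‖ = O(|h|³)`
for bounded `h`. Both `S(h)` and `T(h)` have norm at most `exp(|h|(‖A‖ + ‖B‖))`, so telescoping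
`S^n - T^n = ∑ S^k (S - T) T^(n-1-k)` at `h = t/n` gives the error `n · O(n⁻³) = O(n⁻²)`.
These norm estimates need `‖1‖ = 1`; in general, left multiplication embeds the algebra, with
distortion at most `‖1‖`, into its algebra of operators, where this holds.
-/

noncomputable section

open NormedSpace

section NormedRing

theorem norm_mul_mul_sub_mul_mul_le {R : Type*} [NonUnitalNormedRing R] (a₁ a₂ a₃ b₁ b₂ b₃ : R) :
    ‖a₁ * a₂ * a₃ - b₁ * b₂ * b₃‖
      ≤ ‖a₁ - b₁‖ * ‖a₂‖ * ‖a₃‖ + ‖b₁‖ * ‖a₂ - b₂‖ * ‖a₃‖ + ‖b₁‖ * ‖b₂‖ * ‖a₃ - b₃‖ := by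
  have hsplit : a₁ * a₂ * a₃ - b₁ * b₂ * b₃
      = (a₁ - b₁) * a₂ * a₃ + b₁ * (a₂ - b₂) * a₃ + b₁ * b₂ * (a₃ - b₃) := by
    noncomm_ring
  rw [hsplit]
  refine (norm_add₃_le ..).trans (add_le_add_three ?_ ?_ ?_) <;> exact norm_mul₃_le ..

theorem norm_pow_succ_sub_pow_succ_le {R : Type*} [NormedRing R] [NormOneClass R] {a b : R}
    {K : ℝ} (ha : ‖a‖ ≤ K) (hb : ‖b‖ ≤ K) (n : ℕ) :
    ‖a ^ (n + 1) - b ^ (n + 1)‖ ≤ (n + 1) * K ^ n * ‖a - b‖ := by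
  induction n with
  | zero => simp
  | succ n ih =>
    have hsplit : a ^ (n + 2) - b ^ (n + 2)
        = a * (a ^ (n + 1) - b ^ (n + 1)) + (a - b) * b ^ (n + 1) := by
      rw [pow_succ' a, pow_succ' b (n + 1)]
      noncomm_ring
    have hK : 0 ≤ K := (norm_nonneg a).trans ha
    calc ‖a ^ (n + 2) - b ^ (n + 2)‖
        ≤ ‖a‖ * ‖a ^ (n + 1) - b ^ (n + 1)‖ + ‖a - b‖ * ‖b‖ ^ (n + 1) := by
          rw [hsplit]
          refine (norm_add_le _ _).trans (add_le_add (norm_mul_le _ _) ?_)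
          exact (norm_mul_le _ _).trans (by gcongr; exact norm_pow_le b _)
      _ ≤ K * ((n + 1) * K ^ n * ‖a - b‖) + ‖a - b‖ * K ^ (n + 1) := by gcongr
      _ = (↑(n + 1) + 1) * K ^ (n + 1) * ‖a - b‖ := by push_cast; ring

end NormedRing

section ExpTaylor

open Nat

variable {𝒜 : Type*} [NormedRing 𝒜] [NormedAlgebra ℂ 𝒜]

theorem expSeries_partialSum_three (x : 𝒜) :
    (expSeries ℂ 𝒜).partialSum 3 x = 1 + x + (2⁻¹ : ℂ) • x ^ 2 := by
  simp [FormalMultilinearSeries.partialSum, Finset.sum_range_succ, expSeries_apply_eq,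
    Nat.factorial]

variable [NormOneClass 𝒜]

theorem norm_expSeries_apply_le (n : ℕ) (x : 𝒜) :
    ‖expSeries ℂ 𝒜 n (fun _ => x)‖ ≤ ‖x‖ ^ n / n ! := by
  rw [expSeries_apply_eq, norm_smul, norm_inv, Complex.norm_natCast, div_eq_inv_mul]
  gcongr
  exact norm_pow_le x n

theorem norm_expSeries_partialSum_le (n : ℕ) (x : 𝒜) :
    ‖(expSeries ℂ 𝒜).partialSum n x‖ ≤ Real.exp ‖x‖ :=
  (norm_sum_le _ _).trans <| (Finset.sum_le_sum fun k _ => norm_expSeries_apply_le k x).trans <|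
    Real.sum_le_exp_of_nonneg (norm_nonneg x) n

variable [CompleteSpace 𝒜]

theorem norm_exp_sub_expSeries_partialSum_le (n : ℕ) (x : 𝒜) :
    ‖exp x - (expSeries ℂ 𝒜).partialSum n x‖ ≤ ‖x‖ ^ n * Real.exp ‖x‖ := by
  have htail := (hasSum_nat_add_iff' n).mpr (expSeries_hasSum_exp (𝕂 := ℂ) x)
  have hexp : HasSum (fun k => ‖x‖ ^ k / k !) (Real.exp ‖x‖) := by
    rw [Real.exp_eq_exp_ℝ]
    exact expSeries_div_hasSum_exp ‖x‖
  refine htail.norm_le_of_bounded (hexp.mul_left (‖x‖ ^ n)) fun k => ?_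
  calc _ ≤ ‖x‖ ^ (k + n) / (k + n)! := norm_expSeries_apply_le _ _
    _ ≤ ‖x‖ ^ (k + n) / k ! := by gcongr; exact Nat.le_add_right k n
    _ = ‖x‖ ^ n * (‖x‖ ^ k / k !) := by rw [pow_add]; ring

theorem norm_exp_le_exp_norm (x : 𝒜) : ‖exp x‖ ≤ Real.exp ‖x‖ := by
  simpa [FormalMultilinearSeries.partialSum] using norm_exp_sub_expSeries_partialSum_le 0 x

end ExpTaylor

section Strang

variable {𝒜 : Type*} [NormedRing 𝒜] [NormedAlgebra ℂ 𝒜]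

def strangStep (A B : 𝒜) (h : ℂ) : 𝒜 :=
  exp ((h / 2) • B) * exp (h • A) * exp ((h / 2) • B)

/-- The terms of degree at least `3` in `h` of the product of the quadratic Taylor polynomials of
the three factors of `strangStep A B h`, divided by `h ^ 3`. -/
def strangRemainder (A B : 𝒜) (h : ℂ) : 𝒜 :=
  (4⁻¹ : ℂ) • (A * A * B + B * A * A + B * A * B) + (8⁻¹ : ℂ) • (A * B * B + B * B * A + B * B * B)
    + h • ((16⁻¹ : ℂ) • (A * A * B * B + B * A * B * B + B * B * A * A + B * B * A * B)
      + (8⁻¹ : ℂ) • (B * A * A * B) + (64⁻¹ : ℂ) • (B * B * B * B))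
    + h ^ 2 • ((32⁻¹ : ℂ) • (B * A * A * B * B + B * B * A * A * B)
      + (64⁻¹ : ℂ) • (B * B * A * B * B))
    + h ^ 3 • (128⁻¹ : ℂ) • (B * B * A * A * B * B)

theorem expSeries_partialSum_three_strang (A B : 𝒜) (h : ℂ) :
    (expSeries ℂ 𝒜).partialSum 3 ((h / 2) • B) * (expSeries ℂ 𝒜).partialSum 3 (h • A)
        * (expSeries ℂ 𝒜).partialSum 3 ((h / 2) • B)
      = (expSeries ℂ 𝒜).partialSum 3 (h • (A + B)) + h ^ 3 • strangRemainder A B h := by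
  simp only [expSeries_partialSum_three, strangRemainder, pow_succ, pow_zero, one_mul]
  simp only [mul_add, add_mul, smul_add, smul_mul_assoc, mul_smul_comm, smul_smul, one_mul,
    mul_one, mul_assoc]
  match_scalars <;> ring

theorem strangStep_ofReal_div (A B : 𝒜) (t : ℝ) (n : ℕ) :
    strangStep A B (t / n)
      = exp (((t : ℂ) / (2 * n)) • B) * exp (((t : ℂ) / n) • A)
          * exp (((t : ℂ) / (2 * n)) • B) := by
  rw [strangStep, div_div, mul_comm (n : ℂ)]

variable [NormOneClass 𝒜] [CompleteSpace 𝒜]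

theorem norm_strangStep_le (A B : 𝒜) (h : ℂ) :
    ‖strangStep A B h‖ ≤ Real.exp (‖h‖ * (‖A‖ + ‖B‖)) := by
  have hB : ‖(h / 2) • B‖ = ‖h‖ * ‖B‖ / 2 := by
    rw [norm_smul, norm_div, Complex.norm_two]
    ring
  calc ‖strangStep A B h‖ ≤ ‖exp ((h / 2) • B)‖ * ‖exp (h • A)‖ * ‖exp ((h / 2) • B)‖ :=
        norm_mul₃_le ..
    _ ≤ Real.exp ‖(h / 2) • B‖ * Real.exp ‖h • A‖ * Real.exp ‖(h / 2) • B‖ := by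
        gcongr <;> exact norm_exp_le_exp_norm _
    _ = Real.exp (‖h‖ * (‖A‖ + ‖B‖)) := by
        rw [← Real.exp_add, ← Real.exp_add, hB, norm_smul]
        ring_nf

theorem norm_exp_smul_add_le (A B : 𝒜) (h : ℂ) :
    ‖exp (h • (A + B))‖ ≤ Real.exp (‖h‖ * (‖A‖ + ‖B‖)) :=
  (norm_exp_le_exp_norm _).trans <| Real.exp_le_exp.mpr <| by
    rw [norm_smul]
    gcongr
    exact norm_add_le A B

theorem norm_strangStep_sub_partialSum_le (A B : 𝒜) (h : ℂ) :
    ‖strangStep A B h - (expSeries ℂ 𝒜).partialSum 3 ((h / 2) • B)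
        * (expSeries ℂ 𝒜).partialSum 3 (h • A) * (expSeries ℂ 𝒜).partialSum 3 ((h / 2) • B)‖
      ≤ 3 * (‖h‖ * (‖A‖ + ‖B‖)) ^ 3 * Real.exp (‖h‖ * (‖A‖ + ‖B‖)) ^ 3 := by
  set r := ‖h‖ * (‖A‖ + ‖B‖)
  set p := (expSeries ℂ 𝒜).partialSum 3
  have taylor : ∀ w : 𝒜, ‖w‖ ≤ r →
      ‖exp w‖ ≤ Real.exp r ∧ ‖p w‖ ≤ Real.exp r ∧ ‖exp w - p w‖ ≤ r ^ 3 * Real.exp r := by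
    intro w hw
    have hwr : Real.exp ‖w‖ ≤ Real.exp r := Real.exp_le_exp.mpr hw
    refine ⟨(norm_exp_le_exp_norm w).trans hwr, (norm_expSeries_partialSum_le 3 w).trans hwr,
      (norm_exp_sub_expSeries_partialSum_le 3 w).trans ?_⟩
    gcongr
  obtain ⟨eu, pu, du⟩ := taylor ((h / 2) • B) <| by
    rw [norm_smul, norm_div, Complex.norm_two]
    nlinarith [norm_nonneg h, norm_nonneg A, norm_nonneg B]
  obtain ⟨ev, pv, dv⟩ := taylor (h • A) <| by
    rw [norm_smul]
    exact mul_le_mul_of_nonneg_left (le_add_of_nonneg_right (norm_nonneg B)) (norm_nonneg h)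
  calc _ ≤ ‖exp ((h / 2) • B) - p ((h / 2) • B)‖ * ‖exp (h • A)‖ * ‖exp ((h / 2) • B)‖
          + ‖p ((h / 2) • B)‖ * ‖exp (h • A) - p (h • A)‖ * ‖exp ((h / 2) • B)‖
          + ‖p ((h / 2) • B)‖ * ‖p (h • A)‖ * ‖exp ((h / 2) • B) - p ((h / 2) • B)‖ :=
        norm_mul_mul_sub_mul_mul_le ..
    _ ≤ r ^ 3 * Real.exp r * Real.exp r * Real.exp r
          + Real.exp r * (r ^ 3 * Real.exp r) * Real.exp r
          + Real.exp r * Real.exp r * (r ^ 3 * Real.exp r) := by gcongr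
    _ = 3 * r ^ 3 * Real.exp r ^ 3 := by ring

theorem exists_norm_strangStep_sub_exp_le (A B : 𝒜) (L : ℝ) :
    ∃ C > 0, ∀ h : ℂ, ‖h‖ ≤ L →
      ‖strangStep A B h - exp (h • (A + B))‖ ≤ C * ‖h‖ ^ 3 := by
  obtain ⟨R, hR⟩ := (isCompact_closedBall (0 : ℂ) L).exists_bound_of_continuousOn
    (f := strangRemainder A B) (by unfold strangRemainder; fun_prop)
  set m := ‖A‖ + ‖B‖
  set K := Real.exp (L * m)
  refine ⟨3 * m ^ 3 * K ^ 3 + max R 1 + m ^ 3 * K, by positivity, fun h hh => ?_⟩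
  set p := (expSeries ℂ 𝒜).partialSum 3
  have hhK : Real.exp (‖h‖ * m) ≤ K := Real.exp_le_exp.mpr (by gcongr)
  have hstep : ‖strangStep A B h - p ((h / 2) • B) * p (h • A) * p ((h / 2) • B)‖
      ≤ 3 * m ^ 3 * K ^ 3 * ‖h‖ ^ 3 :=
    calc _ ≤ 3 * (‖h‖ * m) ^ 3 * Real.exp (‖h‖ * m) ^ 3 := norm_strangStep_sub_partialSum_le A B h
      _ ≤ 3 * (‖h‖ * m) ^ 3 * K ^ 3 := by gcongr
      _ = 3 * m ^ 3 * K ^ 3 * ‖h‖ ^ 3 := by ring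
  have hrem : ‖h ^ 3 • strangRemainder A B h‖ ≤ ‖h‖ ^ 3 * max R 1 := by
    rw [norm_smul, norm_pow]
    exact mul_le_mul_of_nonneg_left
      ((hR h (mem_closedBall_zero_iff.mpr hh)).trans (le_max_left R 1)) (by positivity)
  have hsum : ‖exp (h • (A + B)) - p (h • (A + B))‖ ≤ m ^ 3 * K * ‖h‖ ^ 3 := by
    have hc : ‖h • (A + B)‖ ≤ ‖h‖ * m := by
      rw [norm_smul]
      gcongr
      exact norm_add_le A B
    calc _ ≤ ‖h • (A + B)‖ ^ 3 * Real.exp ‖h • (A + B)‖ :=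
          norm_exp_sub_expSeries_partialSum_le 3 _
      _ ≤ (‖h‖ * m) ^ 3 * K := by gcongr; exact hhK.trans' (Real.exp_le_exp.mpr hc)
      _ = m ^ 3 * K * ‖h‖ ^ 3 := by ring
  have hsplit : strangStep A B h - exp (h • (A + B))
      = (strangStep A B h - p ((h / 2) • B) * p (h • A) * p ((h / 2) • B))
        + h ^ 3 • strangRemainder A B h - (exp (h • (A + B)) - p (h • (A + B))) := by
    rw [expSeries_partialSum_three_strang]
    abel
  rw [hsplit]
  calc _ ≤ _ := norm_sub_le _ _
    _ ≤ _ := add_le_add_left (norm_add_le _ _) _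
    _ ≤ 3 * m ^ 3 * K ^ 3 * ‖h‖ ^ 3 + ‖h‖ ^ 3 * max R 1 + m ^ 3 * K * ‖h‖ ^ 3 :=
        add_le_add_three hstep hrem hsum
    _ = _ := by ring

theorem exists_norm_strangStep_pow_sub_exp_le (A B : 𝒜) {L : ℝ} (hL : 0 < L) :
    ∃ C > 0, ∀ n : ℕ, 1 ≤ n → ∀ t ∈ Set.Icc (-L) L,
      ‖strangStep A B (t / n) ^ n - exp ((t : ℂ) • (A + B))‖ ≤ C / (n : ℝ) ^ 2 := by
  obtain ⟨C, hC, hlocal⟩ := exists_norm_strangStep_sub_exp_le A B L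
  set m := ‖A‖ + ‖B‖
  set K := Real.exp (L * m)
  refine ⟨K * C * L ^ 3, by positivity, fun n hn t ht => ?_⟩
  obtain ⟨k, rfl⟩ := Nat.exists_eq_add_of_le' hn
  set h : ℂ := t / (k + 1 : ℕ)
  have hnorm : ‖h‖ = |t| / (k + 1 : ℕ) := by
    rw [norm_div, Complex.norm_real, Real.norm_eq_abs, Complex.norm_natCast]
  have htL : |t| ≤ L := abs_le.mpr ht
  have hhL : ‖h‖ ≤ L / (k + 1 : ℕ) := by
    rw [hnorm]
    gcongr
  have hexp_pow : exp (h • (A + B)) ^ (k + 1) = exp ((t : ℂ) • (A + B)) := by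
    let _ : NormedAlgebra ℚ 𝒜 := .restrictScalars ℚ ℂ 𝒜
    rw [← exp_nsmul, ← Nat.cast_smul_eq_nsmul ℂ, smul_smul,
      mul_div_cancel₀ _ (Nat.cast_ne_zero.mpr k.succ_ne_zero)]
  have hstable : Real.exp (‖h‖ * m) ^ k ≤ K := by
    have hkh : (k : ℝ) * ‖h‖ ≤ L :=
      calc (k : ℝ) * ‖h‖ ≤ (k + 1 : ℕ) * ‖h‖ := by gcongr; linarith
        _ = |t| := by rw [hnorm]; field_simp
        _ ≤ L := htL
    rw [← Real.exp_nat_mul, ← mul_assoc]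
    exact Real.exp_le_exp.mpr (by gcongr)
  rw [← hexp_pow]
  calc _ ≤ (k + 1) * Real.exp (‖h‖ * m) ^ k * ‖strangStep A B h - exp (h • (A + B))‖ :=
        norm_pow_succ_sub_pow_succ_le (norm_strangStep_le A B h) (norm_exp_smul_add_le A B h) k
    _ ≤ (k + 1) * K * (C * (L / (k + 1 : ℕ)) ^ 3) := by
        gcongr
        exact (hlocal h (hhL.trans (div_le_self hL.le (by simp)))).trans (by gcongr)
    _ = K * C * L ^ 3 / ((k + 1 : ℕ) : ℝ) ^ 2 := by
        push_cast
        field_simp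

end Strang

section LeftRegular

variable {𝒜 : Type*} [NormedRing 𝒜] [NormedAlgebra ℂ 𝒜]

variable (𝒜) in
def mulLeftAlgHom : 𝒜 →ₐ[ℂ] 𝒜 →L[ℂ] 𝒜 :=
  AlgHom.ofLinearMap (ContinuousLinearMap.mul ℂ 𝒜 : 𝒜 →ₗ[ℂ] 𝒜 →L[ℂ] 𝒜)
    (ContinuousLinearMap.ext one_mul) fun x y => ContinuousLinearMap.ext (mul_assoc x y)

theorem norm_le_norm_one_mul_norm_mulLeftAlgHom (x : 𝒜) :
    ‖x‖ ≤ ‖(1 : 𝒜)‖ * ‖mulLeftAlgHom 𝒜 x‖ := by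
  simpa [mulLeftAlgHom, mul_comm] using (ContinuousLinearMap.mul ℂ 𝒜 x).le_opNorm 1

variable [CompleteSpace 𝒜]

theorem mulLeftAlgHom_exp (x : 𝒜) : mulLeftAlgHom 𝒜 (exp x) = exp (mulLeftAlgHom 𝒜 x) :=
  let _ : NormedAlgebra ℚ 𝒜 := .restrictScalars ℚ ℂ 𝒜
  let _ : NormedAlgebra ℚ (𝒜 →L[ℂ] 𝒜) := .restrictScalars ℚ ℂ _
  map_exp (mulLeftAlgHom 𝒜) (ContinuousLinearMap.mul ℂ 𝒜).continuous x

theorem mulLeftAlgHom_strangStep (A B : 𝒜) (h : ℂ) :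
    mulLeftAlgHom 𝒜 (strangStep A B h)
      = strangStep (mulLeftAlgHom 𝒜 A) (mulLeftAlgHom 𝒜 B) h := by
  simp only [strangStep, map_mul, mulLeftAlgHom_exp, map_smul]

end LeftRegular

/-- Symmetric (Strang) Lie–Trotter product formula with error bound `O(1/n²)` for
two elements of a unital complex Banach algebra, uniformly on compact
`t`-intervals. -/
theorem trotter_symmetric_banach {𝒜 : Type*} [NormedRing 𝒜] [NormedAlgebra ℂ 𝒜]
    [CompleteSpace 𝒜] (A B : 𝒜) (L : ℝ) (hL : 0 < L) :
    ∃ C : ℝ, 0 < C ∧ ∀ n : ℕ, 1 ≤ n → ∀ t ∈ Set.Icc (-L) L,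
      ‖(exp (((t : ℂ) / (2 * n)) • B) * exp (((t : ℂ) / n) • A)
            * exp (((t : ℂ) / (2 * n)) • B)) ^ n
          - exp ((t : ℂ) • (A + B))‖ ≤ C / (n : ℝ) ^ 2 := by
  rcases subsingleton_or_nontrivial 𝒜 with _ | _
  · exact ⟨1, one_pos, fun n _ t _ => by
      rw [Subsingleton.elim (_ - _ : 𝒜) 0, norm_zero]
      positivity⟩
  obtain ⟨C, hC, hbound⟩ :=
    exists_norm_strangStep_pow_sub_exp_le (mulLeftAlgHom 𝒜 A) (mulLeftAlgHom 𝒜 B) hL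
  refine ⟨‖(1 : 𝒜)‖ * C, mul_pos (norm_pos_iff.mpr one_ne_zero) hC, fun n hn t ht => ?_⟩
  rw [← strangStep_ofReal_div]
  calc _ ≤ ‖(1 : 𝒜)‖ * ‖mulLeftAlgHom 𝒜 (strangStep A B (t / n) ^ n - exp ((t : ℂ) • (A + B)))‖ :=
        norm_le_norm_one_mul_norm_mulLeftAlgHom _
    _ ≤ ‖(1 : 𝒜)‖ * (C / (n : ℝ) ^ 2) := by
        rw [map_sub, map_pow, mulLeftAlgHom_strangStep, mulLeftAlgHom_exp, map_smul, map_add]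
        gcongr
        exact hbound n hn t ht
    _ = ‖(1 : 𝒜)‖ * C / (n : ℝ) ^ 2 := by ring
end
end

section
/- (Norm version of Chernoff's theorem with error bound, Part I, for bounded generator.) Let ℋ be a complex Hilbert space, let H be a bounded selfadjoint operator on ℋ with H ≥ 0, let T > 0, and let F : (0,T] → B(ℋ) be a family of selfadjoint operators with 0 ≤ F(t) ≤ 1 for all t ∈ (0,T]. For t ∈ (0,T] set S_t := t^{−1}(1 − F(t)), and note that 1 + S_t and 1 + H are invertible. Let 0 < α ≤ 1 and suppose there is K > 0 such that ‖(1 + S_t)^{−1} − (1 + H)^{−1}‖ ≤ K·t^α for all t ∈ (0,T]. Then for every δ > 0 there exists C > 0 such that for every t > 0 and every integer n ≥ 1 with t/n ∈ (0,T], ‖F(t/n)^n − exp(−tH)‖ ≤ C·δ^{−2}·t^{α−1}·e^{δt}·n^{−α}. -/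
/-!
Put `τ = t / n` and `S = τ⁻¹ (1 - F τ)`, so that `t S = n (1 - F τ)`, and split
`F τ ^ n - e^{-tH} = (F τ ^ n - e^{-tS}) + (e^{-tS} - e^{-tH})`.

The first term is at most `12 / n` by the functional calculus, since
`|xⁿ - e^{-n(1-x)}| ≤ 12 / n` on `[0, 1]`.

For the second, let `a, b ≥ 0` and `ε = ‖(1+a)⁻¹ - (1+b)⁻¹‖`. Duhamel's formula for
`s ↦ e^{-sa} m e^{-(u-s)b}` has integrand `e^{-sa} (m b - a m) e^{-(u-s)b}`; this equals
`e^{-sa} (1+a) ((1+a)⁻¹ - (1+b)⁻¹) e^{-(u-s)b}` for `m = (1+b)⁻¹` and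
`e^{-sa} ((1+a)⁻¹ - (1+b)⁻¹) (1+b) e^{-(u-s)b}` for `m = (1+a)⁻¹`. As
`‖e^{-sa} (1+a)‖ ≤ 1 + 1/s`, the first is integrable on `[u/2, u]` and the second on `[0, u/2]`,
which bounds `e^{-ua} (1+b)⁻¹ - (1+a)⁻¹ e^{-ub}` by `(u+3) ε`. Writing
`e^{-ta} - e^{-tb} = e^{-ta/2} (1+a) · (1+a)⁻¹ D + D (1+b)⁻¹ · (1+b) e^{-tb/2}` with
`D = e^{-ta/2} - e^{-tb/2}` then gives `‖e^{-ta} - e^{-tb}‖ ≤ (t+2)(t+8)/t · ε`, and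
`ε ≤ K τ^α` by hypothesis.

Both terms are absorbed into `C δ⁻² t^{α-1} e^{δt} n^{-α}` using `τ ≤ T^{1-α} τ^α`.
-/

noncomputable section
open NormedSpace ContinuousLinearMap

theorem mul_exp_neg_mul_le_inv {u : ℝ} (hu : 0 < u) (x : ℝ) :
    x * Real.exp (-(u * x)) ≤ u⁻¹ := by
  have hux : u * x ≤ Real.exp (u * x) := by linarith [Real.add_one_le_exp (u * x)]
  calc x * Real.exp (-(u * x)) = u⁻¹ * ((u * x) * Real.exp (-(u * x))) := by
        field_simp
    _ ≤ u⁻¹ * (Real.exp (u * x) * Real.exp (-(u * x))) := by gcongr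
    _ = u⁻¹ := by rw [← Real.exp_add, add_neg_cancel, Real.exp_zero, mul_one]

theorem abs_pow_sub_exp_neg_mul_le {x : ℝ} (hx₀ : 0 ≤ x) (hx₁ : x ≤ 1) (n : ℕ) :
    |x ^ n - Real.exp (-(n * (1 - x)))| ≤ 12 / n := by
  obtain _ | m := n
  · simp
  set s := 1 - x with hs
  set y := Real.exp (-s)
  have hs₀ : 0 ≤ s := by linarith
  have hxy : x ≤ y := by linarith [Real.add_one_le_exp (-s)]
  have hgap : |x - y| ≤ s ^ 2 := by
    have := Real.abs_exp_sub_one_sub_id_le (x := -s) (by rw [abs_neg, abs_of_nonneg hs₀]; linarith)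
    rwa [show x - y = -(Real.exp (-s) - 1 - -s) by linear_combination hs, abs_neg, ← neg_sq]
  have hmax : max |x| |y| = y := by
    rw [abs_of_nonneg hx₀, abs_of_pos (Real.exp_pos _)]; exact max_eq_right hxy
  have hym : y ^ m ≤ 3 * Real.exp (-((m + 1 : ℕ) / 2 * s)) ^ 2 := by
    have h : y ^ m = Real.exp s * Real.exp (-((m + 1 : ℕ) / 2 * s)) ^ 2 := by
      simp only [y, ← Real.exp_nat_mul, ← Real.exp_add]; congr 1; push_cast; ring
    rw [h]
    gcongr
    calc Real.exp s ≤ Real.exp 1 := Real.exp_le_exp.2 (by linarith)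
      _ ≤ 3 := by linarith [Real.exp_one_lt_d9]
  have hsy : s * Real.exp (-((m + 1 : ℕ) / 2 * s)) ≤ 2 / (m + 1 : ℕ) := by
    simpa using mul_exp_neg_mul_le_inv (by positivity : (0:ℝ) < (m + 1 : ℕ) / 2) s
  have hexp : Real.exp (-((m + 1 : ℕ) * s)) = y ^ (m + 1) := by
    rw [← Real.exp_nat_mul]; ring_nf
  rw [hexp]
  calc |x ^ (m + 1) - y ^ (m + 1)| ≤ |x - y| * (m + 1 : ℕ) * y ^ m := by
        simpa [hmax] using abs_pow_sub_pow_le x y (m + 1)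
    _ ≤ s ^ 2 * (m + 1 : ℕ) * (3 * Real.exp (-((m + 1 : ℕ) / 2 * s)) ^ 2) := by gcongr
    _ = 3 * (m + 1 : ℕ) * (s * Real.exp (-((m + 1 : ℕ) / 2 * s))) ^ 2 := by ring
    _ ≤ 3 * (m + 1 : ℕ) * (2 / (m + 1 : ℕ)) ^ 2 := by gcongr
    _ = 12 / (m + 1 : ℕ) := by field_simp; ring

theorem add_two_mul_add_eight_le_mul_exp {δ t : ℝ} (hδ : 0 < δ) (ht : 0 ≤ t) :
    (t + 2) * (t + 8) ≤ 16 * (1 + δ⁻¹) ^ 2 * Real.exp (δ * t) := by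
  have hexp := Real.quadratic_le_exp_of_nonneg (mul_nonneg hδ.le ht)
  have hδt : t = δ⁻¹ * (δ * t) := by field_simp
  set x := δ * t
  have hδinv : 0 < δ⁻¹ := inv_pos.2 hδ
  calc (t + 2) * (t + 8) ≤ ((1 + δ⁻¹) * (x + 2)) * ((1 + δ⁻¹) * (x + 8)) := by
        rw [hδt]; gcongr <;> nlinarith
    _ = (1 + δ⁻¹) ^ 2 * (x ^ 2 + 10 * x + 16) := by ring
    _ ≤ (1 + δ⁻¹) ^ 2 * (16 * (1 + x + x ^ 2 / 2)) := by gcongr; nlinarith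
    _ ≤ 16 * (1 + δ⁻¹) ^ 2 * Real.exp x := by nlinarith [sq_nonneg (1 + δ⁻¹)]

theorem le_rpow_one_sub_mul_rpow {τ T α : ℝ} (hτ : 0 < τ) (hτT : τ ≤ T) (hα : α ≤ 1) :
    τ ≤ T ^ (1 - α) * τ ^ α := by
  calc τ = τ ^ (1 - α) * τ ^ α := by rw [← Real.rpow_add hτ, sub_add_cancel, Real.rpow_one]
    _ ≤ T ^ (1 - α) * τ ^ α := by gcongr

theorem chernoff_error_le_rate {T α K δ t n : ℝ} (hα : α ≤ 1) (hK : 0 ≤ K) (hδ : 0 < δ)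
    (ht : 0 < t) (hn : 0 < n) (hτT : t / n ≤ T) :
    12 / n + (t + 2) * (t + 8) / t * (K * (t / n) ^ α)
      ≤ (12 * T ^ (1 - α) + 16 * K * (1 + δ⁻¹) ^ 2) * t ^ (α - 1) * Real.exp (δ * t)
          / n ^ α := by
  have hτ : 0 < t / n := div_pos ht hn
  have hrate : t ^ (α - 1) / n ^ α = (t / n) ^ α / t := by
    rw [Real.div_rpow ht.le hn.le, Real.rpow_sub_one ht.ne']; ring
  have hT : 0 ≤ T ^ (1 - α) := Real.rpow_nonneg (hτ.le.trans hτT) _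
  have hexp : 1 ≤ Real.exp (δ * t) := Real.one_le_exp (by positivity)
  calc 12 / n + (t + 2) * (t + 8) / t * (K * (t / n) ^ α)
      = 12 * (t / n) / t + K * ((t + 2) * (t + 8)) * ((t / n) ^ α / t) := by
        field_simp
    _ ≤ 12 * (T ^ (1 - α) * (t / n) ^ α * Real.exp (δ * t)) / t
        + K * (16 * (1 + δ⁻¹) ^ 2 * Real.exp (δ * t)) * ((t / n) ^ α / t) := by
        gcongr 12 * ?_ / t + K * ?_ * _
        · exact (le_rpow_one_sub_mul_rpow hτ hτT hα).trans
            (le_mul_of_one_le_right (mul_nonneg hT (by positivity)) hexp)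
        · exact add_two_mul_add_eight_le_mul_exp hδ ht.le
    _ = (12 * T ^ (1 - α) + 16 * K * (1 + δ⁻¹) ^ 2) * Real.exp (δ * t)
          * (t ^ (α - 1) / n ^ α) := by rw [hrate]; ring
    _ = _ := by ring

theorem Commute.ringInverse_right {M₀ : Type*} [MonoidWithZero M₀] {x u : M₀}
    (h : Commute x u) : Commute x (Ring.inverse u) := by
  by_cases hu : IsUnit u
  · lift u to M₀ˣ using hu
    rw [Ring.inverse_unit]
    exact h.units_inv_right
  · rw [Ring.inverse_non_unit u hu]
    exact Commute.zero_right x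

theorem commute_one_add_exp_smul {𝔸 : Type*} [NormedRing 𝔸] [NormedAlgebra ℝ 𝔸] (a : 𝔸) (s : ℝ) :
    Commute (1 + a) (exp (s • a)) :=
  (((Commute.one_left a).add_left (Commute.refl a)).smul_right s).exp_right

section Duhamel

variable {𝔸 : Type*} [NormedRing 𝔸] [NormedAlgebra ℝ 𝔸] [CompleteSpace 𝔸]

theorem hasDerivAt_exp_neg_smul_mul_mul_exp_sub_smul (a b m : 𝔸) (u s : ℝ) :
    HasDerivAt (fun r : ℝ => exp ((-r) • a) * m * exp ((r - u) • b))
      (exp ((-s) • a) * (m * b - a * m) * exp ((s - u) • b)) s := by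
  have ha := (hasDerivAt_exp_smul_const' (𝕂 := ℝ) a (-s)).scomp s (hasDerivAt_neg s)
  have hb := (hasDerivAt_exp_smul_const (𝕂 := ℝ) b (s - u)).scomp s ((hasDerivAt_id s).sub_const u)
  convert (ha.mul_const m).mul hb using 1
  · funext r; simp [Function.comp_def]
  · have hca : a * exp ((-s) • a) = exp ((-s) • a) * a :=
      ((Commute.refl a).smul_right (-s)).exp_right.eq
    have hcb : exp ((s - u) • b) * b = b * exp ((s - u) • b) :=
      ((Commute.refl b).smul_right (s - u)).exp_right.eq.symm
    simp only [Function.comp_apply, id, neg_one_smul, one_smul, hca, hcb]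
    noncomm_ring

theorem norm_exp_neg_smul_mul_mul_exp_sub_le (a b m : 𝔸) (u : ℝ) {s₀ s₁ C : ℝ} (hs : s₀ ≤ s₁)
    (bound : ∀ s ∈ Set.Ico s₀ s₁,
      ‖exp ((-s) • a) * (m * b - a * m) * exp ((s - u) • b)‖ ≤ C) :
    ‖exp ((-s₁) • a) * m * exp ((s₁ - u) • b) - exp ((-s₀) • a) * m * exp ((s₀ - u) • b)‖
      ≤ C * (s₁ - s₀) :=
  norm_image_sub_le_of_norm_deriv_le_segment'
    (fun s _ => (hasDerivAt_exp_neg_smul_mul_mul_exp_sub_smul a b m u s).hasDerivWithinAt)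
    bound s₁ (Set.right_mem_Icc.2 hs)

end Duhamel

section CStarAlgebra

variable {A : Type*} [CStarAlgebra A]

theorem exp_smul_eq_cfc {a : A} (ha : IsSelfAdjoint a) (s : ℝ) :
    exp (s • a) = cfc (fun x : ℝ => Real.exp (s * x)) a := by
  rw [← CFC.real_exp_eq_normedSpace_exp, ← cfc_comp_smul s Real.exp a]
  simp [smul_eq_mul]

theorem exp_neg_smul_add {a : A} (ha : IsSelfAdjoint a) (s r : ℝ) :
    exp ((-(s + r)) • a) = exp ((-s) • a) * exp ((-r) • a) := by
  rw [exp_smul_eq_cfc ha, exp_smul_eq_cfc ha, exp_smul_eq_cfc ha, ← cfc_mul _ _ a]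
  refine cfc_congr fun x _ => ?_
  rw [← Real.exp_add]
  ring_nf

variable [PartialOrder A] [StarOrderedRing A] {a b : A}

theorem isUnit_one_add_of_nonneg (ha : 0 ≤ a) : IsUnit (1 + a) :=
  (isStrictlyPositive_one.add_nonneg ha).isUnit

theorem norm_exp_smul_le_one (ha : 0 ≤ a) {s : ℝ} (hs : s ≤ 0) : ‖exp (s • a)‖ ≤ 1 := by
  rw [exp_smul_eq_cfc ha.isSelfAdjoint]
  refine norm_cfc_le zero_le_one fun x hx => ?_
  have := spectrum_nonneg_of_nonneg ha hx
  rw [Real.norm_of_nonneg (Real.exp_nonneg _), Real.exp_le_one_iff]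
  nlinarith

theorem norm_exp_neg_smul_mul_one_add_le (ha : 0 ≤ a) {s : ℝ} (hs : 0 < s) :
    ‖exp ((-s) • a) * (1 + a)‖ ≤ 1 + s⁻¹ := by
  have h1a : 1 + a = cfc (fun x : ℝ => 1 + x) a := by
    rw [cfc_const_add (1 : ℝ) (fun x : ℝ => x) a, cfc_id' ℝ a, map_one]
  rw [exp_smul_eq_cfc ha.isSelfAdjoint, h1a, ← cfc_mul _ _ a]
  refine norm_cfc_le (by positivity) fun x hx => ?_
  have := spectrum_nonneg_of_nonneg ha hx
  have hexp : Real.exp (-(s * x)) ≤ 1 := Real.exp_le_one_iff.2 (by nlinarith)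
  rw [Real.norm_of_nonneg (by positivity), neg_mul]
  linarith [mul_exp_neg_mul_le_inv hs x]

theorem norm_one_add_mul_exp_neg_smul_le (ha : 0 ≤ a) {s : ℝ} (hs : 0 < s) :
    ‖(1 + a) * exp ((-s) • a)‖ ≤ 1 + s⁻¹ := by
  rw [(commute_one_add_exp_smul a (-s)).eq]
  exact norm_exp_neg_smul_mul_one_add_le ha hs

theorem norm_exp_mul_inverse_sub_le (ha : 0 ≤ a) (hb : 0 ≤ b) {s u : ℝ} (hs : 0 < s)
    (hsu : s ≤ u) :
    ‖exp ((-u) • a) * Ring.inverse (1 + b)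
        - exp ((-s) • a) * Ring.inverse (1 + b) * exp ((s - u) • b)‖
      ≤ (1 + s⁻¹) * ‖Ring.inverse (1 + a) - Ring.inverse (1 + b)‖ * (u - s) := by
  set p := Ring.inverse (1 + a)
  set q := Ring.inverse (1 + b)
  have hintegrand : q * b - a * q = (1 + a) * (p - q) := by
    rw [← sub_eq_zero]
    calc q * b - a * q - (1 + a) * (p - q) = q * (1 + b) - (1 + a) * p := by noncomm_ring
      _ = 0 := by
        rw [Ring.inverse_mul_cancel _ (isUnit_one_add_of_nonneg hb),
          Ring.mul_inverse_cancel _ (isUnit_one_add_of_nonneg ha), sub_self]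
  have key := norm_exp_neg_smul_mul_mul_exp_sub_le a b q u hsu
    (C := (1 + s⁻¹) * ‖p - q‖) fun r hr => by
      have hr0 : 0 < r := hs.trans_le hr.1
      rw [hintegrand, ← mul_assoc]
      calc ‖exp ((-r) • a) * (1 + a) * (p - q) * exp ((r - u) • b)‖
          ≤ ‖exp ((-r) • a) * (1 + a)‖ * ‖p - q‖ * ‖exp ((r - u) • b)‖ := norm_mul₃_le
        _ ≤ (1 + r⁻¹) * ‖p - q‖ * 1 := by
            gcongr
            · exact norm_exp_neg_smul_mul_one_add_le ha hr0
            · exact norm_exp_smul_le_one hb (by linarith [hr.2])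
        _ ≤ (1 + s⁻¹) * ‖p - q‖ := by
            rw [mul_one]; gcongr; exact hr.1
  simpa only [sub_self, zero_smul, exp_zero, mul_one] using key

theorem norm_exp_mul_inverse_mul_exp_sub_le (ha : 0 ≤ a) (hb : 0 ≤ b) {s u : ℝ} (hs : 0 ≤ s)
    (hsu : s < u) :
    ‖exp ((-s) • a) * Ring.inverse (1 + a) * exp ((s - u) • b)
        - Ring.inverse (1 + a) * exp ((-u) • b)‖
      ≤ (1 + (u - s)⁻¹) * ‖Ring.inverse (1 + a) - Ring.inverse (1 + b)‖ * s := by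
  set p := Ring.inverse (1 + a)
  set q := Ring.inverse (1 + b)
  have hintegrand : p * b - a * p = (p - q) * (1 + b) := by
    rw [← sub_eq_zero]
    calc p * b - a * p - (p - q) * (1 + b) = q * (1 + b) - (1 + a) * p := by noncomm_ring
      _ = 0 := by
        rw [Ring.inverse_mul_cancel _ (isUnit_one_add_of_nonneg hb),
          Ring.mul_inverse_cancel _ (isUnit_one_add_of_nonneg ha), sub_self]
  have key := norm_exp_neg_smul_mul_mul_exp_sub_le a b p u hs
    (C := (1 + (u - s)⁻¹) * ‖p - q‖) fun r hr => by
      have hur : 0 < u - r := by linarith [hr.2]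
      rw [hintegrand, ← mul_assoc, mul_assoc _ (1 + b), show r - u = -(u - r) by ring]
      calc ‖exp ((-r) • a) * (p - q) * ((1 + b) * exp ((-(u - r)) • b))‖
          ≤ ‖exp ((-r) • a)‖ * ‖p - q‖ * ‖(1 + b) * exp ((-(u - r)) • b)‖ := norm_mul₃_le
        _ ≤ 1 * ‖p - q‖ * (1 + (u - r)⁻¹) := by
            gcongr
            · exact norm_exp_smul_le_one ha (by linarith [hr.1])
            · exact norm_one_add_mul_exp_neg_smul_le hb hur
        _ ≤ (1 + (u - s)⁻¹) * ‖p - q‖ := by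
            rw [one_mul, mul_comm]; gcongr; linarith [hr.2]
  simpa only [neg_zero, zero_smul, exp_zero, one_mul, zero_sub, sub_zero] using key

theorem norm_exp_mul_inverse_sub_inverse_mul_exp_le (ha : 0 ≤ a) (hb : 0 ≤ b) {u : ℝ}
    (hu : 0 < u) :
    ‖exp ((-u) • a) * Ring.inverse (1 + b) - Ring.inverse (1 + a) * exp ((-u) • b)‖
      ≤ (u + 3) * ‖Ring.inverse (1 + a) - Ring.inverse (1 + b)‖ := by
  set p := Ring.inverse (1 + a)
  set q := Ring.inverse (1 + b)
  have hu2 : 0 < u / 2 := half_pos hu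
  have hfar := norm_exp_mul_inverse_sub_le ha hb hu2 (half_le_self hu.le)
  have hnear := norm_exp_mul_inverse_mul_exp_sub_le ha hb hu2.le (half_lt_self hu)
  have hmid : ‖exp ((-(u / 2)) • a) * q * exp ((u / 2 - u) • b)
      - exp ((-(u / 2)) • a) * p * exp ((u / 2 - u) • b)‖ ≤ ‖p - q‖ := by
    rw [← sub_mul, ← mul_sub, norm_sub_rev p q]
    calc ‖exp ((-(u / 2)) • a) * (q - p) * exp ((u / 2 - u) • b)‖
        ≤ ‖exp ((-(u / 2)) • a)‖ * ‖q - p‖ * ‖exp ((u / 2 - u) • b)‖ := norm_mul₃_le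
      _ ≤ 1 * ‖q - p‖ * 1 := by
          gcongr
          · exact norm_exp_smul_le_one ha (by linarith)
          · exact norm_exp_smul_le_one hb (by linarith)
      _ = ‖q - p‖ := by ring
  calc ‖exp ((-u) • a) * q - p * exp ((-u) • b)‖
      ≤ ‖exp ((-u) • a) * q - exp ((-(u / 2)) • a) * q * exp ((u / 2 - u) • b)‖
        + ‖exp ((-(u / 2)) • a) * q * exp ((u / 2 - u) • b)
          - exp ((-(u / 2)) • a) * p * exp ((u / 2 - u) • b)‖
        + ‖exp ((-(u / 2)) • a) * p * exp ((u / 2 - u) • b) - p * exp ((-u) • b)‖ :=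
        (norm_sub_le_norm_sub_add_norm_sub _ _ _).trans
          (add_le_add_left (norm_sub_le_norm_sub_add_norm_sub _ _ _) _)
    _ ≤ (1 + (u / 2)⁻¹) * ‖p - q‖ * (u - u / 2) + ‖p - q‖
        + (1 + (u - u / 2)⁻¹) * ‖p - q‖ * (u / 2) := by gcongr
    _ = (u + 3) * ‖p - q‖ := by field_simp; ring

theorem norm_inverse_mul_exp_sub_exp_le (ha : 0 ≤ a) (hb : 0 ≤ b) {u : ℝ} (hu : 0 < u) :
    ‖Ring.inverse (1 + a) * (exp ((-u) • a) - exp ((-u) • b))‖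
      ≤ (u + 4) * ‖Ring.inverse (1 + a) - Ring.inverse (1 + b)‖ := by
  set p := Ring.inverse (1 + a)
  set q := Ring.inverse (1 + b)
  have hcomm : p * exp ((-u) • a) = exp ((-u) • a) * p :=
    (commute_one_add_exp_smul a (-u)).symm.ringInverse_right.symm.eq
  have hsplit : p * (exp ((-u) • a) - exp ((-u) • b))
      = exp ((-u) • a) * (p - q) + (exp ((-u) • a) * q - p * exp ((-u) • b)) := by
    rw [mul_sub, hcomm]; noncomm_ring
  rw [hsplit]
  calc ‖exp ((-u) • a) * (p - q) + (exp ((-u) • a) * q - p * exp ((-u) • b))‖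
      ≤ ‖exp ((-u) • a)‖ * ‖p - q‖ + (u + 3) * ‖p - q‖ :=
        (norm_add_le _ _).trans (add_le_add (norm_mul_le _ _)
          (norm_exp_mul_inverse_sub_inverse_mul_exp_le ha hb hu))
    _ ≤ 1 * ‖p - q‖ + (u + 3) * ‖p - q‖ := by
        gcongr; exact norm_exp_smul_le_one ha (by linarith)
    _ = (u + 4) * ‖p - q‖ := by ring

theorem norm_exp_sub_exp_mul_inverse_le (ha : 0 ≤ a) (hb : 0 ≤ b) {u : ℝ} (hu : 0 < u) :
    ‖(exp ((-u) • a) - exp ((-u) • b)) * Ring.inverse (1 + b)‖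
      ≤ (u + 4) * ‖Ring.inverse (1 + a) - Ring.inverse (1 + b)‖ := by
  set p := Ring.inverse (1 + a)
  set q := Ring.inverse (1 + b)
  have hcomm : exp ((-u) • b) * q = q * exp ((-u) • b) :=
    (commute_one_add_exp_smul b (-u)).symm.ringInverse_right.eq
  have hsplit : (exp ((-u) • a) - exp ((-u) • b)) * q
      = (exp ((-u) • a) * q - p * exp ((-u) • b)) + (p - q) * exp ((-u) • b) := by
    rw [sub_mul, hcomm]; noncomm_ring
  rw [hsplit]
  calc ‖(exp ((-u) • a) * q - p * exp ((-u) • b)) + (p - q) * exp ((-u) • b)‖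
      ≤ (u + 3) * ‖p - q‖ + ‖p - q‖ * ‖exp ((-u) • b)‖ :=
        (norm_add_le _ _).trans (add_le_add
          (norm_exp_mul_inverse_sub_inverse_mul_exp_le ha hb hu) (norm_mul_le _ _))
    _ ≤ (u + 3) * ‖p - q‖ + ‖p - q‖ * 1 := by
        gcongr; exact norm_exp_smul_le_one hb (by linarith)
    _ = (u + 4) * ‖p - q‖ := by ring

theorem norm_exp_neg_smul_sub_exp_neg_smul_le (ha : 0 ≤ a) (hb : 0 ≤ b) {t : ℝ} (ht : 0 < t) :
    ‖exp ((-t) • a) - exp ((-t) • b)‖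
      ≤ (t + 2) * (t + 8) / t * ‖Ring.inverse (1 + a) - Ring.inverse (1 + b)‖ := by
  set p := Ring.inverse (1 + a)
  set q := Ring.inverse (1 + b)
  have ht2 : 0 < t / 2 := half_pos ht
  have hhalves {c : A} (hc : 0 ≤ c) :
      exp ((-t) • c) = exp ((-(t / 2)) • c) * exp ((-(t / 2)) • c) := by
    rw [← exp_neg_smul_add hc.isSelfAdjoint, add_halves]
  set D := exp ((-(t / 2)) • a) - exp ((-(t / 2)) • b)
  have hsplit : exp ((-t) • a) - exp ((-t) • b)
      = exp ((-(t / 2)) • a) * (1 + a) * (p * D) + D * q * ((1 + b) * exp ((-(t / 2)) • b)) := by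
    rw [mul_assoc _ (1 + a), Ring.mul_inverse_cancel_left _ _ (isUnit_one_add_of_nonneg ha),
      mul_assoc D, Ring.inverse_mul_cancel_left _ _ (isUnit_one_add_of_nonneg hb),
      hhalves ha, hhalves hb]
    simp only [D]
    noncomm_ring
  rw [hsplit]
  calc ‖exp ((-(t / 2)) • a) * (1 + a) * (p * D) + D * q * ((1 + b) * exp ((-(t / 2)) • b))‖
      ≤ ‖exp ((-(t / 2)) • a) * (1 + a)‖ * ‖p * D‖
        + ‖D * q‖ * ‖(1 + b) * exp ((-(t / 2)) • b)‖ :=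
        (norm_add_le _ _).trans (add_le_add (norm_mul_le _ _) (norm_mul_le _ _))
    _ ≤ (1 + (t / 2)⁻¹) * ((t / 2 + 4) * ‖p - q‖)
        + (t / 2 + 4) * ‖p - q‖ * (1 + (t / 2)⁻¹) := by
        gcongr
        · exact norm_exp_neg_smul_mul_one_add_le ha ht2
        · exact norm_inverse_mul_exp_sub_exp_le ha hb ht2
        · exact norm_exp_sub_exp_mul_inverse_le ha hb ht2
        · exact norm_one_add_mul_exp_neg_smul_le hb ht2
    _ = (t + 2) * (t + 8) / t * ‖p - q‖ := by field_simp; ring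

theorem norm_pow_sub_exp_le {f : A} (hf₀ : 0 ≤ f) (hf₁ : f ≤ 1) (n : ℕ) :
    ‖f ^ n - exp ((-(n : ℝ)) • (1 - f))‖ ≤ 12 / n := by
  have hexp : (-(n : ℝ)) • (1 - f) = cfc (fun x : ℝ => -(n * (1 - x))) f := by
    rw [cfc_neg (fun x : ℝ => (n : ℝ) * (1 - x)) f, cfc_const_mul (n : ℝ) (fun x : ℝ => 1 - x) f,
      cfc_sub (fun _ : ℝ => (1 : ℝ)) (fun x : ℝ => x) f, cfc_const_one ℝ f, cfc_id' ℝ f, neg_smul]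
  rw [hexp, ← CFC.real_exp_eq_normedSpace_exp, ← cfc_comp Real.exp _ f, ← cfc_pow_id (R := ℝ) f n,
    ← cfc_sub (fun x : ℝ => x ^ n) _ f]
  refine norm_cfc_le (by positivity) fun x hx => ?_
  exact abs_pow_sub_exp_neg_mul_le (spectrum_nonneg_of_nonneg hf₀ hx)
    ((CFC.le_one_iff f).1 hf₁ x hx) n

end CStarAlgebra

theorem chernoff_norm_error_bound_I_general {ℋ : Type*} [NormedAddCommGroup ℋ]
    [InnerProductSpace ℂ ℋ] [CompleteSpace ℋ]
    (H : ℋ →L[ℂ] ℋ) (hH : H.IsPositive)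
    (T : ℝ) (hT : 0 < T) (F : ℝ → (ℋ →L[ℂ] ℋ))
    (hFpos : ∀ t ∈ Set.Ioc (0 : ℝ) T, (F t).IsPositive)
    (hFle : ∀ t ∈ Set.Ioc (0 : ℝ) T, (1 - F t).IsPositive)
    (α K : ℝ) (hα1 : α ≤ 1) (hK : 0 < K)
    (hres : ∀ t ∈ Set.Ioc (0 : ℝ) T,
      ‖Ring.inverse (1 + ((t : ℂ))⁻¹ • (1 - F t)) - Ring.inverse (1 + H)‖ ≤ K * t ^ α) :
    ∀ δ : ℝ, 0 < δ → ∃ C : ℝ, 0 < C ∧ ∀ t : ℝ, 0 < t → ∀ n : ℕ, 1 ≤ n →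
      t / n ∈ Set.Ioc (0 : ℝ) T →
        ‖(F (t / n)) ^ n - exp ((-(t : ℂ)) • H)‖
          ≤ C / δ ^ 2 * t ^ (α - 1) * Real.exp (δ * t) / (n : ℝ) ^ α := by
  intro δ hδ
  refine ⟨δ ^ 2 * (12 * T ^ (1 - α) + 16 * K * (1 + δ⁻¹) ^ 2), by positivity, ?_⟩
  intro t ht n hn hτ
  set τ := t / (n : ℝ)
  have hF₀ : 0 ≤ F τ := (nonneg_iff_isPositive _).2 (hFpos τ hτ)
  have hF₁ : F τ ≤ 1 := sub_nonneg.1 ((nonneg_iff_isPositive _).2 (hFle τ hτ))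
  set S := τ⁻¹ • (1 - F τ)
  have hS : 0 ≤ S := smul_nonneg (inv_nonneg.2 hτ.1.le) (sub_nonneg.2 hF₁)
  have htS : (-t) • S = (-(n : ℝ)) • (1 - F τ) := by
    rw [smul_smul]; congr 1; simp only [τ]; field_simp
  have hresS : ‖Ring.inverse (1 + S) - Ring.inverse (1 + H)‖ ≤ K * τ ^ α := by
    simpa only [← Complex.ofReal_inv, Complex.coe_smul] using hres τ hτ
  rw [← Complex.ofReal_neg, Complex.coe_smul, mul_div_cancel_left₀ _ (by positivity)]
  calc ‖F τ ^ n - exp ((-t) • H)‖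
      ≤ ‖F τ ^ n - exp ((-t) • S)‖ + ‖exp ((-t) • S) - exp ((-t) • H)‖ :=
        norm_sub_le_norm_sub_add_norm_sub _ _ _
    _ ≤ 12 / n + (t + 2) * (t + 8) / t * (K * τ ^ α) := by
        gcongr
        · rw [htS]; exact norm_pow_sub_exp_le hF₀ hF₁ n
        · exact (norm_exp_neg_smul_sub_exp_neg_smul_le hS ((nonneg_iff_isPositive _).2 hH) ht).trans
            (by gcongr)
    _ ≤ _ := chernoff_error_le_rate hα1 hK.le hδ ht (by positivity) hτ.2

/-- Norm version of Chernoff's theorem with error bound, Part I (bounded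
generator): if `0 ≤ F(t) ≤ 1` are selfadjoint for `t ∈ (0,T]`, `H ≥ 0` is a
bounded selfadjoint operator, `S_t = t⁻¹(1 − F(t))`, and
`‖(1+S_t)⁻¹ − (1+H)⁻¹‖ ≤ K·t^α` on `(0,T]` for some `0 < α ≤ 1`, then for every
`δ > 0` there is `C > 0` with
`‖F(t/n)^n − e^{−tH}‖ ≤ C·δ⁻²·t^{α−1}·e^{δt}·n^{−α}` whenever `t/n ∈ (0,T]`. -/
theorem chernoff_norm_error_bound_I {ℋ : Type*} [NormedAddCommGroup ℋ]
    [InnerProductSpace ℂ ℋ] [CompleteSpace ℋ]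
    (H : ℋ →L[ℂ] ℋ) (hH : H.IsPositive)
    (T : ℝ) (hT : 0 < T) (F : ℝ → (ℋ →L[ℂ] ℋ))
    (hFpos : ∀ t ∈ Set.Ioc (0 : ℝ) T, (F t).IsPositive)
    (hFle : ∀ t ∈ Set.Ioc (0 : ℝ) T, (1 - F t).IsPositive)
    (hSinv : ∀ t ∈ Set.Ioc (0 : ℝ) T, IsUnit (1 + ((t : ℂ))⁻¹ • (1 - F t)))
    (hHinv : IsUnit (1 + H))
    (α K : ℝ) (hα0 : 0 < α) (hα1 : α ≤ 1) (hK : 0 < K)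
    (hres : ∀ t ∈ Set.Ioc (0 : ℝ) T,
      ‖Ring.inverse (1 + ((t : ℂ))⁻¹ • (1 - F t)) - Ring.inverse (1 + H)‖ ≤ K * t ^ α) :
    ∀ δ : ℝ, 0 < δ → ∃ C : ℝ, 0 < C ∧ ∀ t : ℝ, 0 < t → ∀ n : ℕ, 1 ≤ n →
      t / n ∈ Set.Ioc (0 : ℝ) T →
        ‖(F (t / n)) ^ n - exp ((-(t : ℂ)) • H)‖
          ≤ C / δ ^ 2 * t ^ (α - 1) * Real.exp (δ * t) / (n : ℝ) ^ α :=
  chernoff_norm_error_bound_I_general H hH T hT F hFpos hFle α K hα1 hK hres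
end
end
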